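/- arXiv:1312.1526 — 2 statements merged into one kernel-verified Lean document; each statement's English description precedes it below -/
import Mathlib

section
/- Let P₁ and P₂ be upward paths in ℝ² with disjoint images. If P₁ ≺ P₂ then not P₂ ≺ P₁. That is, it cannot happen that simultaneously there is a height y at which the point of P₂ lies strictly to the right of the point of P₁, and a height y' at which the point of P₁ lies strictly to the right of the point of P₂. -/
/-!
The point of an upward path at height `y` depends continuously on `y`: the height map is a
continuous bijection from the compact interval `[0,1]` onto the y-range, hence a homeomorphism.
If `P₁ ≺ P₂` at height `a` and `P₂ ≺ P₁` at height `b`, the difference of the x-coordinates of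
the two paths changes sign between `a` and `b` on the common y-range, so by the intermediate
value theorem the paths meet.
-/

open Set

/-- An upward path: a continuous injective curve on `[0,1]` in `ℝ²` whose
y-coordinate is strictly monotone increasing. -/
structure UpwardPath where
  toFun : ℝ → ℝ × ℝ
  continuousOn : ContinuousOn toFun (Set.Icc 0 1)
  injOn : Set.InjOn toFun (Set.Icc 0 1)
  strictMonoY : StrictMonoOn (fun t => (toFun t).2) (Set.Icc 0 1)

namespace UpwardPath

/-- The image (trace) of an upward path in the plane. -/
def image (P : UpwardPath) : Set (ℝ × ℝ) := P.toFun '' Set.Icc 0 1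

/-- The set of points strictly to the right of `P`, at heights in the y-range of `P`. -/
def Right (P : UpwardPath) : Set (ℝ × ℝ) :=
  {p | (P.toFun 0).2 ≤ p.2 ∧ p.2 ≤ (P.toFun 1).2 ∧
    ∀ u' : ℝ, (u', p.2) ∈ P.image → u' < p.1}

/-- The set of points strictly to the left of `P`, at heights in the y-range of `P`. -/
def Left (P : UpwardPath) : Set (ℝ × ℝ) :=
  {p | (P.toFun 0).2 ≤ p.2 ∧ p.2 ≤ (P.toFun 1).2 ∧
    ∀ u' : ℝ, (u', p.2) ∈ P.image → p.1 < u'}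

/-- `P.Prec Q` (written `P ≺ Q`): some point of `Q` lies strictly to the right
(same y-coordinate, larger x-coordinate) of some point of `P`. -/
def Prec (P Q : UpwardPath) : Prop :=
  ∃ p ∈ P.image, ∃ q ∈ Q.image, p.2 = q.2 ∧ p.1 < q.1

/-- The y-range of an upward path. -/
def yRange (P : UpwardPath) : Set ℝ := Set.Icc (P.toFun 0).2 (P.toFun 1).2

end UpwardPath

namespace UpwardPath

variable (P : UpwardPath)

lemma bijOn_height : BijOn (fun t ↦ (P.toFun t).2) (Icc 0 1) P.yRange :=
  ⟨P.strictMonoY.monotoneOn.mapsTo_Icc, P.strictMonoY.injOn,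
    intermediate_value_Icc zero_le_one P.continuousOn.snd⟩

noncomputable def heightHomeomorph : Icc (0 : ℝ) 1 ≃ₜ P.yRange :=
  Continuous.homeoOfEquivCompactToT2 (f := Equiv.ofBijective _ P.bijOn_height.bijective)
    (P.continuousOn.snd.mapsToRestrict P.bijOn_height.mapsTo)

lemma yRange_nonempty : P.yRange.Nonempty :=
  P.bijOn_height.mapsTo.nonempty (nonempty_Icc.2 zero_le_one)

/-- The x-coordinate of the point of `P` at height `y`, extended constantly outside the
y-range. -/
noncomputable def xAt : ℝ → ℝ :=
  IccExtend (nonempty_Icc.1 P.yRange_nonempty) fun y ↦ (P.toFun (P.heightHomeomorph.symm y)).1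

lemma continuous_xAt : Continuous P.xAt :=
  (P.continuousOn.fst.domRestrict.comp P.heightHomeomorph.symm.continuous).Icc_extend'

lemma toFun_heightHomeomorph_symm (y : P.yRange) :
    P.toFun (P.heightHomeomorph.symm y) = (P.xAt y, (y : ℝ)) := by
  ext
  · exact (IccExtend_of_mem (f := fun y ↦ (P.toFun (P.heightHomeomorph.symm y)).1) _ y.2).symm
  · exact congrArg Subtype.val (P.heightHomeomorph.apply_symm_apply y)

lemma mk_mem_image_iff {u y : ℝ} : (u, y) ∈ P.image ↔ y ∈ P.yRange ∧ u = P.xAt y := by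
  constructor
  · rintro ⟨t, ht, htuy⟩
    set z := P.heightHomeomorph ⟨t, ht⟩
    have hz : (z : ℝ) = y := congrArg Prod.snd htuy
    have := P.toFun_heightHomeomorph_symm z
    rw [Homeomorph.symm_apply_apply, htuy, hz] at this
    exact ⟨hz ▸ z.2, congrArg Prod.fst this⟩
  · rintro ⟨hy, rfl⟩
    exact ⟨_, Subtype.mem _, P.toFun_heightHomeomorph_symm ⟨y, hy⟩⟩

lemma Prec.exists_xAt_lt {P Q : UpwardPath} (h : P.Prec Q) :
    ∃ y ∈ P.yRange ∩ Q.yRange, P.xAt y < Q.xAt y := by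
  obtain ⟨⟨u, y⟩, hp, ⟨v, y'⟩, hq, rfl : y = y', huv : u < v⟩ := h
  rw [mk_mem_image_iff] at hp hq
  exact ⟨y, ⟨hp.1, hq.1⟩, hp.2 ▸ hq.2 ▸ huv⟩

lemma image_inter_nonempty_of_prec_of_prec {P Q : UpwardPath} (hPQ : P.Prec Q) (hQP : Q.Prec P) :
    (P.image ∩ Q.image).Nonempty := by
  obtain ⟨a, ha, hPQa⟩ := hPQ.exists_xAt_lt
  obtain ⟨b, hb, hQPb⟩ := hQP.exists_xAt_lt
  obtain ⟨c, ⟨hcP, hcQ⟩, hc⟩ := (ordConnected_Icc.inter ordConnected_Icc).isPreconnected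
    |>.intermediate_value₂ ha (inter_comm _ _ ▸ hb) P.continuous_xAt.continuousOn
      Q.continuous_xAt.continuousOn hPQa.le hQPb.le
  exact ⟨(P.xAt c, c), P.mk_mem_image_iff.2 ⟨hcP, rfl⟩, Q.mk_mem_image_iff.2 ⟨hcQ, hc⟩⟩

end UpwardPath

/-- The relation `≺` is anti-symmetric on disjoint upward paths: if `P₁ ≺ P₂`
then not `P₂ ≺ P₁`. -/
theorem prec_antisymm (P₁ P₂ : UpwardPath)
    (hdisj : Disjoint P₁.image P₂.image) (h : P₁.Prec P₂) : ¬ P₂.Prec P₁ := fun h' ↦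
  not_disjoint_iff_nonempty_inter.2 (UpwardPath.image_inter_nonempty_of_prec_of_prec h h') hdisj
end

section
/- Let 𝒫 = {P₁,…,P_k} be pairwise disjoint upward paths where P_i goes from s_i to t_i, and let P = P_i be maximal in 𝒫 with respect to ≺*. Let P' be an upward path from s_i to t_i with image contained in P ∪ Right(P). Then for every Q ∈ 𝒫 with Q ≠ P, the images of P' and Q are disjoint; hence (𝒫 \ {P}) ∪ {P'} is again a family of pairwise disjoint upward paths connecting the same terminal pairs. -/
open Set

/-! A point of `P'` off `P i` lies in `Right (P i)`; by the intermediate value theorem `P i` passes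
through its height, so if it lay on `P j` we would have `P i ≺ P j`, contradicting maximality. -/

namespace UpwardPath

theorem exists_mem_image_snd_eq (P : UpwardPath) {y : ℝ} (hy : y ∈ P.yRange) :
    ∃ x, (x, y) ∈ P.image := by
  obtain ⟨t, ht, hty⟩ := intermediate_value_Icc zero_le_one
    (continuous_snd.comp_continuousOn P.continuousOn) hy
  exact ⟨(P.toFun t).1, t, ht, Prod.ext rfl hty⟩

theorem prec_of_mem_right_of_mem_image {P Q : UpwardPath} {q : ℝ × ℝ} (hqP : q ∈ P.Right)
    (hqQ : q ∈ Q.image) : P.Prec Q := by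
  obtain ⟨h0, h1, hright⟩ := hqP
  obtain ⟨x, hx⟩ := P.exists_mem_image_snd_eq ⟨h0, h1⟩
  exact ⟨(x, q.2), hx, q, hqQ, rfl, hright x hx⟩

theorem disjoint_image_of_subset_union_right {P Q : UpwardPath} {S : Set (ℝ × ℝ)}
    (hPQ : Disjoint P.image Q.image) (hprec : ¬ P.Prec Q) (hS : S ⊆ P.image ∪ P.Right) :
    Disjoint S Q.image := by
  refine disjoint_left.mpr fun q hqS hqQ => ?_
  rcases hS hqS with hqP | hqR
  · exact disjoint_left.mp hPQ hqP hqQ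
  · exact hprec (prec_of_mem_right_of_mem_image hqR hqQ)

end UpwardPath

theorem disjoint_comp_update {ι β γ : Type*} [DecidableEq ι] [PartialOrder γ] [OrderBot γ]
    {f : ι → β} {g : β → γ} (hf : ∀ a b, a ≠ b → Disjoint (g (f a)) (g (f b)))
    {i : ι} {x : β} (hx : ∀ j, j ≠ i → Disjoint (g x) (g (f j))) :
    ∀ a b, a ≠ b → Disjoint (g (Function.update f i x a)) (g (Function.update f i x b)) := by
  intro a b hab
  rcases eq_or_ne a i with rfl | ha
  · simpa [Function.update_of_ne hab.symm] using hx b hab.symm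
  rcases eq_or_ne b i with rfl | hb
  · simpa [Function.update_of_ne ha] using (hx a ha).symm
  simpa [Function.update_of_ne ha, Function.update_of_ne hb] using hf a b hab

theorem valid_solution_exchange_general {k : ℕ} (P : Fin k → UpwardPath)
    (hdisj : ∀ a b : Fin k, a ≠ b → Disjoint (P a).image (P b).image)
    (i : Fin k)
    (hmax : ∀ j : Fin k,
      ¬ Relation.TransGen (fun a b : Fin k => (P a).Prec (P b)) i j)
    (P' : UpwardPath)
    (hsub : P'.image ⊆ (P i).image ∪ (P i).Right) :
    (∀ j : Fin k, j ≠ i → Disjoint P'.image (P j).image) ∧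
    (∀ a b : Fin k, a ≠ b →
      Disjoint ((Function.update P i P') a).image
        ((Function.update P i P') b).image) := by
  have hP' : ∀ j : Fin k, j ≠ i → Disjoint P'.image (P j).image := fun j hj =>
    UpwardPath.disjoint_image_of_subset_union_right (hdisj i j hj.symm)
      (fun hprec => hmax j (.single hprec)) hsub
  exact ⟨hP', disjoint_comp_update (g := UpwardPath.image) hdisj hP'⟩

/-- Exchange lemma: in a family of pairwise disjoint upward paths, a path `P i`
that is maximal with respect to `≺*` may be replaced by any upward path `P'`
with the same endpoints lying in `P i ∪ Right (P i)`: the new path is disjoint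
from all other paths, so the updated family is again pairwise disjoint. -/
theorem valid_solution_exchange {k : ℕ} (P : Fin k → UpwardPath)
    (hdisj : ∀ a b : Fin k, a ≠ b → Disjoint (P a).image (P b).image)
    (i : Fin k)
    (hmax : ∀ j : Fin k,
      ¬ Relation.TransGen (fun a b : Fin k => (P a).Prec (P b)) i j)
    (P' : UpwardPath)
    (hs : P'.toFun 0 = (P i).toFun 0) (ht : P'.toFun 1 = (P i).toFun 1)
    (hsub : P'.image ⊆ (P i).image ∪ (P i).Right) :
    (∀ j : Fin k, j ≠ i → Disjoint P'.image (P j).image) ∧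
    (∀ a b : Fin k, a ≠ b →
      Disjoint ((Function.update P i P') a).image
        ((Function.update P i P') b).image) :=
  valid_solution_exchange_general P hdisj i hmax P' hsub
end
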